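/- Suppose complex numbers λ_{r,s} (indexed by r, s ∈ Z^N) satisfy, for a non-degenerate skew-symmetric N×N matrix B, the cocycle-type relation (Bl|s)λ_{r,s+l} + (Bl|r)λ_{s,r+l} - (Bl|r+s)λ_{r,s} = 0 for all nonzero l, r, s ∈ Z^N. If additionally (Bl|s) ≠ 0, then λ_{s+l,s} = λ_{s,s} and λ_{s,l} = λ_{s,s} = λ_{l,l}. -/
import Mathlib


open Matrix

/-- The bilinear form `(Br | s)`. -/
noncomputable def dotB {N : ℕ} (B : Matrix (Fin N) (Fin N) ℂ)
    (r s : Fin N → ℤ) : ℂ :=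
  (B *ᵥ (fun i => (r i : ℂ))) ⬝ᵥ (fun i => (s i : ℂ))

section aux

variable {N : ℕ} (B : Matrix (Fin N) (Fin N) ℂ)

lemma fc_add (r t : Fin N → ℤ) :
    (fun i => (((r + t) i : ℤ) : ℂ)) =
      (fun i => ((r i : ℤ) : ℂ)) + (fun i => ((t i : ℤ) : ℂ)) := by
  funext i; push_cast; simp

lemma fc_neg (r : Fin N → ℤ) :
    (fun i => (((-r) i : ℤ) : ℂ)) = -(fun i => ((r i : ℤ) : ℂ)) := by
  funext i; push_cast; simp

lemma dotB_add_right (l r t : Fin N → ℤ) :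
    dotB B l (r + t) = dotB B l r + dotB B l t := by
  unfold dotB; rw [fc_add, dotProduct_add]

lemma dotB_add_left (r t s : Fin N → ℤ) :
    dotB B (r + t) s = dotB B r s + dotB B t s := by
  unfold dotB; rw [fc_add, Matrix.mulVec_add, add_dotProduct]

lemma dotB_neg_right (l r : Fin N → ℤ) :
    dotB B l (-r) = -dotB B l r := by
  unfold dotB; rw [fc_neg, dotProduct_neg]

lemma dotB_neg_left (r s : Fin N → ℤ) :
    dotB B (-r) s = -dotB B r s := by
  unfold dotB; rw [fc_neg, Matrix.mulVec_neg, neg_dotProduct]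

lemma dotB_sub_right (l r t : Fin N → ℤ) :
    dotB B l (r - t) = dotB B l r - dotB B l t := by
  rw [sub_eq_add_neg, dotB_add_right, dotB_neg_right, sub_eq_add_neg]

lemma dotB_sub_left (r t s : Fin N → ℤ) :
    dotB B (r - t) s = dotB B r s - dotB B t s := by
  rw [sub_eq_add_neg, dotB_add_left, dotB_neg_left, sub_eq_add_neg]

lemma dotB_zero_left (s : Fin N → ℤ) : dotB B 0 s = 0 := by
  unfold dotB
  have h0 : (fun i => (((0 : Fin N → ℤ) i : ℤ) : ℂ)) = (0 : Fin N → ℂ) := by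
    funext i; simp
  rw [h0, Matrix.mulVec_zero, zero_dotProduct]

lemma dotB_zero_right (l : Fin N → ℤ) : dotB B l 0 = 0 := by
  unfold dotB
  have h0 : (fun i => (((0 : Fin N → ℤ) i : ℤ) : ℂ)) = (0 : Fin N → ℂ) := by
    funext i; simp
  rw [h0, dotProduct_zero]

lemma dotB_skew (hB : Bᵀ = -B) (r s : Fin N → ℤ) :
    dotB B r s = -dotB B s r := by
  unfold dotB
  rw [dotProduct_comm, Matrix.dotProduct_mulVec, ← Matrix.mulVec_transpose, hB,
    Matrix.neg_mulVec, neg_dotProduct]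

lemma dotB_self (hB : Bᵀ = -B) (s : Fin N → ℤ) : dotB B s s = 0 := by
  have h := dotB_skew B hB s s
  have h2 : (2 : ℂ) * dotB B s s = 0 := by linear_combination h
  simpa using h2

lemma dotB_ne_zero_left {l s : Fin N → ℤ} (h : dotB B l s ≠ 0) : l ≠ 0 := by
  rintro rfl; exact h (dotB_zero_left B s)

lemma dotB_ne_zero_right {l s : Fin N → ℤ} (h : dotB B l s ≠ 0) : s ≠ 0 := by
  rintro rfl; exact h (dotB_zero_right B l)

/-- Fact A: if `(Bl|s) ≠ 0` then `λ_{s,s+l} = λ_{s,s}`. -/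
lemma factA
    (lam : (Fin N → ℤ) → (Fin N → ℤ) → ℂ)
    (hrel : ∀ l r s : Fin N → ℤ, l ≠ 0 → r ≠ 0 → s ≠ 0 →
      dotB B l s * lam r (s + l) + dotB B l r * lam s (r + l)
        - dotB B l (r + s) * lam r s = 0)
    (l s : Fin N → ℤ) (h : dotB B l s ≠ 0) :
    lam s (s + l) = lam s s := by
  have hl := dotB_ne_zero_left B h
  have hs := dotB_ne_zero_right B h
  have H := hrel l s s hl hs hs
  rw [dotB_add_right] at H
  have h2 : (2 : ℂ) * (dotB B l s * (lam s (s + l) - lam s s)) = 0 := by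
    linear_combination H
  have h3 : dotB B l s * (lam s (s + l) - lam s s) = 0 :=
    (mul_eq_zero.mp h2).resolve_left two_ne_zero
  have h4 := (mul_eq_zero.mp h3).resolve_left h
  exact sub_eq_zero.mp h4

/-- Diagonal equality: if `(Bl|s) ≠ 0` then `λ_{s,s} = λ_{l,l}`. -/
lemma diag_eq (hB : Bᵀ = -B)
    (lam : (Fin N → ℤ) → (Fin N → ℤ) → ℂ)
    (hrel : ∀ l r s : Fin N → ℤ, l ≠ 0 → r ≠ 0 → s ≠ 0 →
      dotB B l s * lam r (s + l) + dotB B l r * lam s (r + l)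
        - dotB B l (r + s) * lam r s = 0)
    (l s : Fin N → ℤ) (h : dotB B l s ≠ 0) :
    lam s s = lam l l := by
  have hl0 := dotB_ne_zero_left B h
  have hs0 := dotB_ne_zero_right B h
  have hss := dotB_self B hB s
  have hll := dotB_self B hB l
  have hsl : dotB B s l = -dotB B l s := dotB_skew B hB s l
  have hls_ne : l - s ≠ 0 := by
    intro e
    exact h (by rw [sub_eq_zero.mp e]; exact hss)
  have hb1 : dotB B (l - s) s = dotB B l s := by
    rw [dotB_sub_left, hss, sub_zero]
  have hb2 : dotB B (l - s) l = dotB B l s := by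
    rw [dotB_sub_left, hll, hsl]; ring
  have hb3 : dotB B (l - s) (l + s) = 2 * dotB B l s := by
    rw [dotB_sub_left, dotB_add_right, dotB_add_right, hss, hll, hsl]; ring
  have hd1 : lam l s = lam l l := by
    have hne : dotB B (s - l) l ≠ 0 := by
      rw [dotB_sub_left, hll, hsl]; simpa using h
    have h1 := factA B lam hrel (s - l) l hne
    have he : l + (s - l) = s := by abel
    rwa [he] at h1
  have hd2 : lam s (l + (l - s)) = lam s s := by
    have hne : dotB B ((l - s) + (l - s)) s ≠ 0 := by
      rw [dotB_add_left, hb1]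
      intro e
      exact h (add_self_eq_zero.mp e)
    have h1 := factA B lam hrel ((l - s) + (l - s)) s hne
    have he : s + ((l - s) + (l - s)) = l + (l - s) := by abel
    rwa [he] at h1
  have H := hrel (l - s) l s hls_ne hl0 hs0
  rw [hb1, hb2, hb3] at H
  have he : s + (l - s) = l := by abel
  rw [he, hd2, hd1] at H
  have h2 : dotB B l s * (lam s s - lam l l) = 0 := by linear_combination H
  exact sub_eq_zero.mp ((mul_eq_zero.mp h2).resolve_left h)

end aux

theorem lambda_cocycle_consequences (N : ℕ) (B : Matrix (Fin N) (Fin N) ℂ)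
    (hB : Bᵀ = -B) (hInv : IsUnit B.det)
    (lam : (Fin N → ℤ) → (Fin N → ℤ) → ℂ)
    (hrel : ∀ l r s : Fin N → ℤ, l ≠ 0 → r ≠ 0 → s ≠ 0 →
      dotB B l s * lam r (s + l) + dotB B l r * lam s (r + l)
        - dotB B l (r + s) * lam r s = 0)
    (l s : Fin N → ℤ) (h : dotB B l s ≠ 0) :
    lam (s + l) s = lam s s ∧ lam s l = lam s s ∧ lam s s = lam l l := by
  have hss := dotB_self B hB s
  have hll := dotB_self B hB l
  refine ⟨?_, ?_, diag_eq B hB lam hrel l s h⟩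
  · have hne : dotB B (-l) (s + l) ≠ 0 := by
      rw [dotB_neg_left, dotB_add_right, hll, add_zero]
      exact neg_ne_zero.mpr h
    have h1 := factA B lam hrel (-l) (s + l) hne
    have he : (s + l) + (-l) = s := by abel
    rw [he] at h1
    have hne2 : dotB B (s + l) s ≠ 0 := by
      rw [dotB_add_left, hss, zero_add]; exact h
    have h2 := diag_eq B hB lam hrel (s + l) s hne2
    rw [h1, h2]
  · have hne : dotB B (l - s) s ≠ 0 := by
      rw [dotB_sub_left, hss, sub_zero]; exact h
    have h1 := factA B lam hrel (l - s) s hne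
    have he : s + (l - s) = l := by abel
    rwa [he] at h1
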